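/- arXiv:2110.01943 — 2 statements merged into one kernel-verified Lean document; each statement's English description precedes it below -/
import Mathlib

section
/- For any constant c ∈ (0,1), the infimum over all real z > 1 of (z − z^c)/(z − z^{−c}) equals (1 − c)/(1 + c). -/
/-!
Clearing denominators and multiplying by `z ^ c`, the bound
`(1 - c) / (1 + c) ≤ (z - z^c) / (z - z^(-c))` becomes `(1 + c) z^(2c) ≤ 2c z^(1+c) + (1 - c)`,
which is Bernoulli's inequality for `z^(1+c)` raised to the exponent `2c / (1 + c) ∈ [0, 1]`.
The bound is sharp as `z → 1⁺`: numerator and denominator both vanish at `z = 1`, with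
derivatives `1 - c` and `1 + c` there.
-/

open Real Filter Set Topology

theorem isGLB_image_of_tendsto {α γ : Type*} [TopologicalSpace γ] [Preorder γ]
    [OrderClosedTopology γ] {f : α → γ} {s : Set α} {l : Filter α} [l.NeBot] {b : γ}
    (hb : ∀ x ∈ s, b ≤ f x) (hs : s ∈ l) (hf : Tendsto f l (𝓝 b)) : IsGLB (f '' s) b :=
  ⟨forall_mem_image.2 hb, fun _ hb' =>
    ge_of_tendsto hf (mem_of_superset hs fun _ hx => hb' (mem_image_of_mem f hx))⟩

theorem tendsto_div_nhdsNE_of_hasDerivAt {f g : ℝ → ℝ} {a f' g' : ℝ}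
    (hf : HasDerivAt f f' a) (hg : HasDerivAt g g' a) (hfa : f a = 0) (hga : g a = 0)
    (hg' : g' ≠ 0) : Tendsto (fun x => f x / g x) (𝓝[≠] a) (𝓝 (f' / g')) := by
  refine ((hasDerivAt_iff_tendsto_slope.1 hf).div (hasDerivAt_iff_tendsto_slope.1 hg) hg').congr'
    (eventually_nhdsWithin_of_forall fun x hx => ?_)
  have hxa : x - a ≠ 0 := sub_ne_zero.2 hx
  simp only [Pi.div_apply, slope_def_field, hfa, hga, sub_zero]
  exact div_div_div_cancel_right₀ hxa _ _

theorem one_add_mul_rpow_two_mul_le {z c : ℝ} (hz : 0 ≤ z) (hc0 : 0 ≤ c) (hc1 : c ≤ 1) :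
    (1 + c) * z ^ (2 * c) ≤ 2 * c * z ^ (1 + c) + (1 - c) := by
  have h1c : 0 < 1 + c := by linarith
  have hpow : (z ^ (1 + c)) ^ (2 * c / (1 + c)) = z ^ (2 * c) := by
    rw [← rpow_mul hz, mul_div_cancel₀ _ h1c.ne']
  have bernoulli := rpow_one_add_le_one_add_mul_self (s := z ^ (1 + c) - 1)
    (by linarith [rpow_nonneg hz (1 + c)]) (p := 2 * c / (1 + c)) (by positivity)
    ((div_le_one h1c).2 (by linarith))
  rw [add_sub_cancel, hpow] at bernoulli
  calc (1 + c) * z ^ (2 * c) ≤ (1 + c) * (1 + 2 * c / (1 + c) * (z ^ (1 + c) - 1)) := by gcongr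
    _ = 2 * c * z ^ (1 + c) + (1 - c) := by field_simp; ring

theorem one_sub_div_one_add_le_sub_rpow_div {z c : ℝ} (hz : 1 < z) (hc0 : 0 ≤ c) (hc1 : c ≤ 1) :
    (1 - c) / (1 + c) ≤ (z - z ^ c) / (z - z ^ (-c)) := by
  have hz0 : 0 < z := by linarith
  have hden : 0 < z - z ^ (-c) := by
    linarith [rpow_le_one_of_one_le_of_nonpos hz.le (neg_nonpos.2 hc0)]
  have hzc : 0 < z ^ c := rpow_pos_of_pos hz0 c
  rw [div_le_div_iff₀ (by linarith) hden]
  refine le_of_mul_le_mul_right ?_ hzc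
  have e1 : z * z ^ c = z ^ (1 + c) := by rw [rpow_add hz0, rpow_one]
  have e2 : z ^ (-c) * z ^ c = 1 := by rw [← rpow_add hz0, neg_add_cancel, rpow_zero]
  have e3 : z ^ c * z ^ c = z ^ (2 * c) := by rw [← rpow_add hz0, two_mul]
  have := one_add_mul_rpow_two_mul_le hz0.le hc0 hc1
  linear_combination this - 2 * c * e1 - (1 - c) * e2 + (1 + c) * e3

theorem hasDerivAt_id_sub_rpow_at_one (p : ℝ) : HasDerivAt (fun z : ℝ => z - z ^ p) (1 - p) 1 := by
  simpa using (hasDerivAt_id (1 : ℝ)).fun_sub (hasDerivAt_rpow_const (p := p) (Or.inl one_ne_zero))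

theorem tendsto_sub_rpow_div_sub_rpow_neg_nhdsNE_one {c : ℝ} (hc : 1 + c ≠ 0) :
    Tendsto (fun z : ℝ => (z - z ^ c) / (z - z ^ (-c))) (𝓝[≠] 1) (𝓝 ((1 - c) / (1 + c))) := by
  have hg := hasDerivAt_id_sub_rpow_at_one (-c)
  rw [sub_neg_eq_add] at hg
  exact tendsto_div_nhdsNE_of_hasDerivAt (hasDerivAt_id_sub_rpow_at_one c) hg (by simp) (by simp) hc

theorem stmt_0 (c : ℝ) (hc : c ∈ Set.Ioo (0:ℝ) 1) :
    IsGLB ((fun z : ℝ => (z - z ^ c) / (z - z ^ (-c))) '' Set.Ioi 1)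
      ((1 - c) / (1 + c)) := by
  obtain ⟨hc0, hc1⟩ := hc
  have hlim := (tendsto_sub_rpow_div_sub_rpow_neg_nhdsNE_one (c := c) (by linarith)).mono_left
    (nhdsGT_le_nhdsNE (1 : ℝ))
  exact isGLB_image_of_tendsto (fun z hz => one_sub_div_one_add_le_sub_rpow_div hz hc0.le hc1.le)
    self_mem_nhdsWithin hlim
end

section
/- Let E₁, E₂ be real vector spaces, C₁ ⊂ E₁ and C₂ ⊂ E₂ convex cones with Hilbert projective metrics d_{C₁}, d_{C₂}, and L : E₁ → E₂ a linear operator with L(C₁) ⊂ C₂. If D := sup{d_{C₂}(L v₁, L v₂) : v₁, v₂ ∈ C₁} < ∞, then for all v₁, v₂ ∈ C₁ with d_{C₁}(v₁,v₂) < ∞, d_{C₂}(L v₁, L v₂) ≤ (1 − e^{−D}) · d_{C₁}(v₁, v₂). -/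
open Filter Classical

/-- The Hilbert projective (pseudo-)distance of a convex cone, with value `⊤`
when `α(v,w) = 0` or `β(v,w) = ∞`. -/

noncomputable def coneDist {E : Type*} [AddCommGroup E] [Module ℝ E]
    (C : Set E) (v w : E) : EReal :=
  if ({t : ℝ | 0 < t ∧ w - t • v ∈ C}.Nonempty ∧
      {s : ℝ | 0 < s ∧ s • v - w ∈ C}.Nonempty ∧
      BddAbove {t : ℝ | 0 < t ∧ w - t • v ∈ C}) then
    ((Real.log (sInf {s : ℝ | 0 < s ∧ s • v - w ∈ C} /
        sSup {t : ℝ | 0 < t ∧ w - t • v ∈ C}) : ℝ) : EReal)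
  else ⊤

/-!
Birkhoff's argument. For `t < s` with `v₂ - t • v₁ ∈ C₁` and `s • v₁ - v₂ ∈ C₁`, put
`p := v₂ - t • v₁` and `q := s • v₁ - v₂`. If `Lq - τ • Lp` and `σ • Lp - Lq` lie in `C₂`, then
writing `Lv₁`, `Lv₂` as positive combinations of `Lp`, `Lq` gives
`d(Lv₁, Lv₂) ≤ log (((s + tτ)/(1 + τ)) / ((s + tσ)/(1 + σ))) ≤ (1 - τ/σ) log (s/t)`,
the last step being a one-variable calculus inequality in `s/t`. Letting `τ, σ` tend to the extreme
ratios of `(Lp, Lq)`, whose distance is at most `D`, makes `τ/σ` tend to a limit `≥ e^{-D}`;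
letting `t, s` tend to the extreme ratios of `(v₁, v₂)` makes `log (s/t)` tend to `d(v₁, v₂)`.
-/

open Real Topology

theorem log_div_le_mul_log {x τ σ : ℝ} (hx : 1 ≤ x) (hτ : 0 < τ) (hτσ : τ ≤ σ) :
    log ((x + τ) / (1 + τ) / ((x + σ) / (1 + σ))) ≤ (1 - τ / σ) * log x := by
  have hσ : 0 < σ := hτ.trans_le hτσ
  -- the claim is `g 1 ≤ g x`, and `g' ≥ 0` on `(0, ∞)`
  set g : ℝ → ℝ := fun y => (1 - τ / σ) * log y - log (y + τ) + log (y + σ)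
  set g' : ℝ → ℝ := fun y => (1 - τ / σ) * y⁻¹ - (y + τ)⁻¹ + (y + σ)⁻¹
  have hg : ∀ y : ℝ, 0 < y → HasDerivAt g (g' y) y := fun y hy =>
    (((hasDerivAt_log hy.ne').const_mul _).sub
      ((hasDerivAt_log (by positivity)).comp_add_const y τ)).add
      ((hasDerivAt_log (by positivity)).comp_add_const y σ)
  have hg'_nonneg : ∀ y : ℝ, 0 < y → 0 ≤ g' y := by
    intro y hy
    have : g' y = (σ - τ) * (y * y + τ * y + τ * σ) / (σ * y * (y + τ) * (y + σ)) := by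
      simp only [g']
      field_simp
      ring
    rw [this]
    have := sub_nonneg.2 hτσ
    positivity
  have hmono : MonotoneOn g (Set.Ici 1) := by
    refine monotoneOn_of_hasDerivWithinAt_nonneg (convex_Ici 1)
      (fun y hy => (hg y (zero_lt_one.trans_le hy)).continuousAt.continuousWithinAt)
      (fun y hy => (hg y ?_).hasDerivWithinAt) (fun y hy => hg'_nonneg y ?_) <;>
    · rw [interior_Ici] at hy
      exact zero_lt_one.trans hy
  have h1x := hmono Set.self_mem_Ici hx hx
  simp only [g, log_one, mul_zero, zero_sub] at h1x
  rw [log_div (by positivity) (by positivity), log_div (by positivity) (by positivity),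
    log_div (by positivity) (by positivity)]
  linarith

section ConeRatios

variable {E : Type*} [AddCommGroup E] [Module ℝ E]

/-- The set whose supremum is `α(v, w)`. -/
def lowerRatios (C : Set E) (v w : E) : Set ℝ := {t : ℝ | 0 < t ∧ w - t • v ∈ C}

/-- The set whose infimum is `β(v, w)`. -/
def upperRatios (C : Set E) (v w : E) : Set ℝ := {s : ℝ | 0 < s ∧ s • v - w ∈ C}

theorem coneDist_ne_top_iff {C : Set E} {v w : E} :
    coneDist C v w ≠ ⊤ ↔ (lowerRatios C v w).Nonempty ∧ (upperRatios C v w).Nonempty ∧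
      BddAbove (lowerRatios C v w) := by
  unfold coneDist lowerRatios upperRatios
  split_ifs with h <;> simp [h]

theorem coneDist_eq_log {C : Set E} {v w : E} (hT : (lowerRatios C v w).Nonempty)
    (hS : (upperRatios C v w).Nonempty) (hB : BddAbove (lowerRatios C v w)) :
    coneDist C v w = ↑(log (sInf (upperRatios C v w) / sSup (lowerRatios C v w))) :=
  if_pos ⟨hT, hS, hB⟩

theorem exists_convexCone_coe_eq {C : Set E} (hsmul : ∀ v ∈ C, ∀ t : ℝ, 0 < t → t • v ∈ C)
    (hadd : ∀ v₁ ∈ C, ∀ v₂ ∈ C, ∀ t₁ t₂ : ℝ, 0 < t₁ → 0 < t₂ → t₁ • v₁ + t₂ • v₂ ∈ C) :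
    ∃ K : ConvexCone ℝ E, (K : Set E) = C :=
  ⟨{ carrier := C
     smul_mem' := fun c hc x hx => hsmul x hx c hc
     add_mem' := fun x hx y hy => by simpa using hadd x hx y hy 1 1 one_pos one_pos }, rfl⟩

variable {K : ConvexCone ℝ E} {v w : E}

/-- If `s < t`, adding the two memberships gives `-v ∈ K`, and then `lowerRatios K v w` would be
unbounded. -/
theorem le_of_mem_lowerRatios_of_mem_upperRatios (hB : BddAbove (lowerRatios K v w))
    {t s : ℝ} (ht : t ∈ lowerRatios K v w) (hs : s ∈ upperRatios K v w) : t ≤ s := by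
  by_contra! hst
  have hts : t - s ≠ 0 := (sub_pos.2 hst).ne'
  have hneg : -v ∈ K := by
    convert K.smul_mem (inv_pos.2 (sub_pos.2 hst)) (K.add_mem ht.2 hs.2) using 1
    match_scalars <;> field_simp <;> ring
  obtain ⟨b, hb⟩ := hB
  have hmem : t + (max b 0 + 1) ∈ lowerRatios K v w := by
    refine ⟨by linarith [ht.1, le_max_right b 0], ?_⟩
    rw [SetLike.mem_coe]
    convert K.add_mem ht.2 (K.smul_mem (by positivity : 0 < max b 0 + 1) hneg) using 1
    module
  linarith [hb hmem, le_max_left b 0, ht.1]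

theorem mem_lowerRatios_of_lt (hv : v ∈ K) {t t' : ℝ} (ht : t ∈ lowerRatios K v w)
    (h0 : 0 < t') (h : t' < t) : t' ∈ lowerRatios K v w := by
  refine ⟨h0, ?_⟩
  rw [SetLike.mem_coe]
  convert K.add_mem ht.2 (K.smul_mem (sub_pos.2 h) hv) using 1
  module

theorem mem_upperRatios_of_gt (hv : v ∈ K) {s s' : ℝ} (hs : s ∈ upperRatios K v w)
    (h : s < s') : s' ∈ upperRatios K v w := by
  refine ⟨hs.1.trans h, ?_⟩
  rw [SetLike.mem_coe]
  convert K.add_mem hs.2 (K.smul_mem (sub_pos.2 h) hv) using 1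
  module

theorem csSup_lowerRatios_pos {C : Set E} (hT : (lowerRatios C v w).Nonempty)
    (hB : BddAbove (lowerRatios C v w)) : 0 < sSup (lowerRatios C v w) :=
  let ⟨_, ht⟩ := hT
  ht.1.trans_le (le_csSup hB ht)

theorem csSup_lowerRatios_le_csInf_upperRatios (hT : (lowerRatios K v w).Nonempty)
    (hS : (upperRatios K v w).Nonempty) (hB : BddAbove (lowerRatios K v w)) :
    sSup (lowerRatios K v w) ≤ sInf (upperRatios K v w) :=
  csSup_le hT fun _ ht => le_csInf hS fun _ hs => le_of_mem_lowerRatios_of_mem_upperRatios hB ht hs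

theorem eventually_mem_lowerRatios (hv : v ∈ K) (hT : (lowerRatios K v w).Nonempty)
    (hB : BddAbove (lowerRatios K v w)) :
    ∀ᶠ x in 𝓝[<] sSup (lowerRatios K v w), x ∈ lowerRatios K v w := by
  filter_upwards [Ioo_mem_nhdsLT (csSup_lowerRatios_pos hT hB)] with x ⟨hx0, hx⟩
  obtain ⟨t, ht, hxt⟩ := exists_lt_of_lt_csSup hT hx
  exact mem_lowerRatios_of_lt hv ht hx0 hxt

theorem eventually_mem_upperRatios (hv : v ∈ K) (hS : (upperRatios K v w).Nonempty) :
    ∀ᶠ y in 𝓝[>] sInf (upperRatios K v w), y ∈ upperRatios K v w := by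
  filter_upwards [eventually_mem_nhdsWithin] with y hy
  obtain ⟨s, hs, hsy⟩ := exists_lt_of_csInf_lt hS hy
  exact mem_upperRatios_of_gt hv hs hsy

theorem le_of_forall_mem_ratios (hv : v ∈ K) (hT : (lowerRatios K v w).Nonempty)
    (hS : (upperRatios K v w).Nonempty) (hB : BddAbove (lowerRatios K v w))
    {d : EReal} {f : ℝ → ℝ → ℝ}
    (hf : ContinuousAt (Function.uncurry f) (sSup (lowerRatios K v w), sInf (upperRatios K v w)))
    (h : ∀ t ∈ lowerRatios K v w, ∀ s ∈ upperRatios K v w, t < s → d ≤ f t s) :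
    d ≤ f (sSup (lowerRatios K v w)) (sInf (upperRatios K v w)) := by
  have hαβ := csSup_lowerRatios_le_csInf_upperRatios hT hS hB
  have hlim : Tendsto (fun p : ℝ × ℝ => (f p.1 p.2 : EReal))
      (𝓝[<] sSup (lowerRatios K v w) ×ˢ 𝓝[>] sInf (upperRatios K v w))
      (𝓝 (f (sSup (lowerRatios K v w)) (sInf (upperRatios K v w)))) :=
    (continuous_coe_real_ereal.tendsto _).comp <| hf.tendsto.mono_left <| by
      rw [nhds_prod_eq]; exact prod_mono nhdsWithin_le_nhds nhdsWithin_le_nhds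
  refine ge_of_tendsto hlim ?_
  filter_upwards [((eventually_mem_lowerRatios hv hT hB).and eventually_mem_nhdsWithin).prod_mk
    ((eventually_mem_upperRatios hv hS).and eventually_mem_nhdsWithin)]
    with p ⟨⟨ht, htα⟩, hs, hβs⟩
  exact h _ ht _ hs ((htα.trans_le hαβ).trans hβs)

theorem coneDist_le_log_div (hB : BddAbove (lowerRatios K v w)) {t s : ℝ}
    (ht : t ∈ lowerRatios K v w) (hs : s ∈ upperRatios K v w) :
    coneDist K v w ≤ ↑(log (s / t)) := by
  have hα : t ≤ sSup (lowerRatios K v w) := le_csSup hB ht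
  have hαβ := csSup_lowerRatios_le_csInf_upperRatios ⟨t, ht⟩ ⟨s, hs⟩ hB
  rw [coneDist_eq_log ⟨t, ht⟩ ⟨s, hs⟩ hB, EReal.coe_le_coe_iff]
  have hβ : sInf (upperRatios K v w) ≤ s := csInf_le ⟨0, fun _ h => h.1.le⟩ hs
  have ht0 := ht.1
  exact log_le_log (div_pos (by linarith) (by linarith)) (div_le_div₀ (by linarith) hβ ht0 hα)

theorem mem_lowerRatios_of_mem_upperRatios_sub {a b : E} {t s σ : ℝ} (ht : 0 < t) (hs : 0 < s)
    (hσ : σ ∈ upperRatios K (b - t • a) (s • a - b)) :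
    (s + t * σ) / (1 + σ) ∈ lowerRatios K a b := by
  have hσ0 := hσ.1
  refine ⟨by positivity, ?_⟩
  rw [SetLike.mem_coe]
  convert K.smul_mem (inv_pos.2 (by positivity : 0 < 1 + σ)) hσ.2 using 1
  match_scalars <;> field_simp <;> ring

theorem mem_upperRatios_of_mem_lowerRatios_sub {a b : E} {t s τ : ℝ} (ht : 0 < t) (hs : 0 < s)
    (hτ : τ ∈ lowerRatios K (b - t • a) (s • a - b)) :
    (s + t * τ) / (1 + τ) ∈ upperRatios K a b := by
  have hτ0 := hτ.1
  refine ⟨by positivity, ?_⟩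
  rw [SetLike.mem_coe]
  convert K.smul_mem (inv_pos.2 (by positivity : 0 < 1 + τ)) hτ.2 using 1
  match_scalars <;> field_simp <;> ring

theorem coneDist_le_of_sub_mem {a b : E} {t s D : ℝ} (ht : 0 < t) (hts : t < s)
    (hp : b - t • a ∈ K) (hB : BddAbove (lowerRatios K a b))
    (hD : coneDist K (b - t • a) (s • a - b) ≤ D) :
    coneDist K a b ≤ ↑((1 - exp (-D)) * log (s / t)) := by
  set p := b - t • a
  set q := s • a - b
  obtain ⟨hT, hS, hBpq⟩ := coneDist_ne_top_iff.1 (ne_top_of_le_ne_top (EReal.coe_ne_top D) hD)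
  have hs : 0 < s := ht.trans hts
  have hst : 1 ≤ s / t := (one_le_div ht).2 hts.le
  have hstep : ∀ τ ∈ lowerRatios K p q, ∀ σ ∈ upperRatios K p q, τ < σ →
      coneDist K a b ≤ ↑((1 - τ / σ) * log (s / t)) := by
    intro τ hτ σ hσ hτσ
    calc coneDist K a b ≤ ↑(log ((s + t * τ) / (1 + τ) / ((s + t * σ) / (1 + σ)))) :=
          coneDist_le_log_div hB (mem_lowerRatios_of_mem_upperRatios_sub ht hs hσ)
            (mem_upperRatios_of_mem_lowerRatios_sub ht hs hτ)
      _ = ↑(log ((s / t + τ) / (1 + τ) / ((s / t + σ) / (1 + σ)))) := by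
          congr 2
          field_simp
      _ ≤ ↑((1 - τ / σ) * log (s / t)) :=
          EReal.coe_le_coe_iff.2 (log_div_le_mul_log hst hτ.1 hτσ.le)
  have hm := csSup_lowerRatios_pos hT hBpq
  have hM := hm.trans_le (csSup_lowerRatios_le_csInf_upperRatios hT hS hBpq)
  have hlim := le_of_forall_mem_ratios hp hT hS hBpq
    (f := fun τ σ => (1 - τ / σ) * log (s / t)) (by fun_prop (disch := exact hM.ne')) hstep
  refine hlim.trans (EReal.coe_le_coe_iff.2 ?_)
  have hratio : exp (-D) ≤ sSup (lowerRatios K p q) / sInf (upperRatios K p q) := by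
    rw [coneDist_eq_log hT hS hBpq, EReal.coe_le_coe_iff] at hD
    rw [← le_log_iff_exp_le (div_pos hm hM), ← inv_div, log_inv]
    linarith
  gcongr
  exact log_nonneg hst

end ConeRatios

theorem stmt_17_general {E₁ E₂ : Type*} [AddCommGroup E₁] [Module ℝ E₁]
    [AddCommGroup E₂] [Module ℝ E₂] (C₁ : Set E₁) (C₂ : Set E₂)
    (h1₁ : ∀ v ∈ C₁, ∀ t : ℝ, 0 < t → t • v ∈ C₁)
    (h2₁ : ∀ v₁ ∈ C₁, ∀ v₂ ∈ C₁, ∀ t₁ t₂ : ℝ, 0 < t₁ → 0 < t₂ → t₁ • v₁ + t₂ • v₂ ∈ C₁)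
    (h1₂ : ∀ v ∈ C₂, ∀ t : ℝ, 0 < t → t • v ∈ C₂)
    (h2₂ : ∀ v₁ ∈ C₂, ∀ v₂ ∈ C₂, ∀ t₁ t₂ : ℝ, 0 < t₁ → 0 < t₂ → t₁ • v₁ + t₂ • v₂ ∈ C₂)
    (L : E₁ →ₗ[ℝ] E₂) (hL : ∀ v ∈ C₁, L v ∈ C₂)
    (D : ℝ)
    (hD : ∀ v₁ ∈ C₁, ∀ v₂ ∈ C₁, coneDist C₂ (L v₁) (L v₂) ≤ (D : EReal)) :
    ∀ v₁ ∈ C₁, ∀ v₂ ∈ C₁, ∀ r : ℝ, coneDist C₁ v₁ v₂ = (r : EReal) →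
      coneDist C₂ (L v₁) (L v₂) ≤ (((1 - Real.exp (-D)) * r : ℝ) : EReal) := by
  intro v₁ hv₁ v₂ hv₂ r hr
  obtain ⟨K₁, rfl⟩ := exists_convexCone_coe_eq h1₁ h2₁
  obtain ⟨K₂, rfl⟩ := exists_convexCone_coe_eq h1₂ h2₂
  obtain ⟨hT, hS, hB⟩ := coneDist_ne_top_iff.1 (hr ▸ EReal.coe_ne_top r)
  have hB₂ : BddAbove (lowerRatios K₂ (L v₁) (L v₂)) :=
    (coneDist_ne_top_iff.1 (ne_top_of_le_ne_top (EReal.coe_ne_top D) (hD v₁ hv₁ v₂ hv₂))).2.2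
  rw [coneDist_eq_log hT hS hB, EReal.coe_eq_coe_iff] at hr
  subst hr
  have hα := csSup_lowerRatios_pos hT hB
  have hβ := hα.trans_le (csSup_lowerRatios_le_csInf_upperRatios hT hS hB)
  refine le_of_forall_mem_ratios hv₁ hT hS hB (f := fun t s => (1 - exp (-D)) * log (s / t))
    (by fun_prop (disch := positivity)) fun t ht s hs hts => ?_
  have hDts := hD _ ht.2 _ hs.2
  rw [map_sub, map_smul, map_sub, map_smul] at hDts
  exact coneDist_le_of_sub_mem ht.1 hts (by simpa using hL _ ht.2) hB₂ hDts

/-- Birkhoff's inequality. -/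
theorem stmt_17 {E₁ E₂ : Type*} [AddCommGroup E₁] [Module ℝ E₁]
    [AddCommGroup E₂] [Module ℝ E₂] (C₁ : Set E₁) (C₂ : Set E₂)
    (h1₁ : ∀ v ∈ C₁, ∀ t : ℝ, 0 < t → t • v ∈ C₁)
    (h2₁ : ∀ v₁ ∈ C₁, ∀ v₂ ∈ C₁, ∀ t₁ t₂ : ℝ, 0 < t₁ → 0 < t₂ → t₁ • v₁ + t₂ • v₂ ∈ C₁)
    (h3₁ : ∀ w : E₁,
      (∃ v ∈ C₁, ∃ t : ℕ → ℝ, (∀ n, 0 < t n) ∧ Tendsto t atTop (nhds 0) ∧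
        ∀ n, w + t n • v ∈ C₁) →
      (∃ v ∈ C₁, ∃ t : ℕ → ℝ, (∀ n, 0 < t n) ∧ Tendsto t atTop (nhds 0) ∧
        ∀ n, -w + t n • v ∈ C₁) →
      w = 0)
    (h1₂ : ∀ v ∈ C₂, ∀ t : ℝ, 0 < t → t • v ∈ C₂)
    (h2₂ : ∀ v₁ ∈ C₂, ∀ v₂ ∈ C₂, ∀ t₁ t₂ : ℝ, 0 < t₁ → 0 < t₂ → t₁ • v₁ + t₂ • v₂ ∈ C₂)
    (h3₂ : ∀ w : E₂,
      (∃ v ∈ C₂, ∃ t : ℕ → ℝ, (∀ n, 0 < t n) ∧ Tendsto t atTop (nhds 0) ∧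
        ∀ n, w + t n • v ∈ C₂) →
      (∃ v ∈ C₂, ∃ t : ℕ → ℝ, (∀ n, 0 < t n) ∧ Tendsto t atTop (nhds 0) ∧
        ∀ n, -w + t n • v ∈ C₂) →
      w = 0)
    (L : E₁ →ₗ[ℝ] E₂) (hL : ∀ v ∈ C₁, L v ∈ C₂)
    (D : ℝ)
    (hD : ∀ v₁ ∈ C₁, ∀ v₂ ∈ C₁, coneDist C₂ (L v₁) (L v₂) ≤ (D : EReal)) :
    ∀ v₁ ∈ C₁, ∀ v₂ ∈ C₁, ∀ r : ℝ, coneDist C₁ v₁ v₂ = (r : EReal) →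
      coneDist C₂ (L v₁) (L v₂) ≤ (((1 - Real.exp (-D)) * r : ℝ) : EReal) :=
  stmt_17_general C₁ C₂ h1₁ h2₁ h1₂ h2₂ L hL D hD
end
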